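/- The Beta skew-normal distribution BSN(1, 1/2, 1) is the standard normal distribution: for all real x, (2 / B(1/2, 1)) · Φ(x; 1)^{−1/2} · φ(x) Φ(x) = φ(x), where B denotes the Beta function. -/

import Mathlib

open MeasureTheory

/-- Standard normal density. -/
noncomputable def normPdf (x : ℝ) : ℝ := Real.exp (-x ^ 2 / 2) / Real.sqrt (2 * Real.pi)

/-- Standard normal cdf. -/
noncomputable def normCdf (x : ℝ) : ℝ := ∫ t in Set.Iic x, normPdf t

/-- Skew-normal cdf with parameter `l`. -/
noncomputable def snCdf (l z : ℝ) : ℝ := ∫ t in Set.Iic z, 2 * normPdf t * normCdf (l * t)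

/-- The Beta function. -/
noncomputable def betaFn (a b : ℝ) : ℝ := Real.Gamma a * Real.Gamma b / Real.Gamma (a + b)

/-- The Beta skew-normal density with parameters `l`, `a`, `b`. -/
noncomputable def bsnPdf (l a b x : ℝ) : ℝ :=
  (2 / betaFn a b) * snCdf l x ^ (a - 1) * (1 - snCdf l x) ^ (b - 1) * normPdf x *
    normCdf (l * x)

/-!
For `λ = 1` the skew-normal cdf is `Φ(x; 1) = Φ(x)²`, since both sides vanish at `-∞` and have
derivative `2 φ Φ`. With `b = 1` the Beta factor `(1 - Φ(x; λ))^(b-1)` disappears and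
`B(a, 1) = 1/a`, so `BSN(1, a, 1)` has density `2a Φ(x)^(2a-1) φ(x)`, which is `φ` at `a = 1/2`.
-/

open Set Filter Topology

section IntegralIic

variable {f : ℝ → ℝ}

lemma integral_Iic_eq_add_intervalIntegral (hf : Integrable f) (a b : ℝ) :
    ∫ t in Iic b, f t = (∫ t in Iic a, f t) + ∫ t in a..b, f t := by
  rw [← intervalIntegral.integral_Iic_sub_Iic hf.integrableOn hf.integrableOn]
  ring

lemma hasDerivAt_integral_Iic (hf : Integrable f) (hfc : Continuous f) (x : ℝ) :
    HasDerivAt (fun y => ∫ t in Iic y, f t) (f x) x := by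
  have h := (intervalIntegral.integral_hasDerivAt_right (a := 0) (b := x) hf.intervalIntegrable
    (hfc.stronglyMeasurableAtFilter _ _) hfc.continuousAt).const_add (∫ t in Iic 0, f t)
  exact h.congr_of_eventuallyEq (Eventually.of_forall (integral_Iic_eq_add_intervalIntegral hf 0))

lemma tendsto_integral_Iic_atBot (hf : Integrable f) :
    Tendsto (fun y => ∫ t in Iic y, f t) atBot (𝓝 0) := by
  have h := (intervalIntegral_tendsto_integral_Iic (0 : ℝ) hf.integrableOn tendsto_id).const_sub
    (∫ t in Iic 0, f t)
  rw [sub_self] at h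
  refine h.congr fun y => ?_
  rw [id, integral_Iic_eq_add_intervalIntegral hf y 0, add_sub_cancel_right]

end IntegralIic

lemma normPdf_pos (x : ℝ) : 0 < normPdf x := by
  unfold normPdf
  positivity

lemma continuous_normPdf : Continuous normPdf := by
  unfold normPdf
  fun_prop

lemma integrable_normPdf : Integrable normPdf := by
  have h : normPdf = fun x => Real.exp (-(1 / 2) * x ^ 2) / Real.sqrt (2 * Real.pi) := by
    funext x
    unfold normPdf
    ring_nf
  rw [h]
  exact (integrable_exp_neg_mul_sq (by norm_num)).div_const _

lemma normCdf_pos (x : ℝ) : 0 < normCdf x := by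
  have hsupp : Function.support normPdf = univ :=
    eq_univ_of_forall fun t => (normPdf_pos t).ne'
  rw [normCdf, setIntegral_pos_iff_support_of_nonneg_ae
    (Eventually.of_forall fun t => (normPdf_pos t).le) integrable_normPdf.integrableOn,
    hsupp, univ_inter]
  simp [Real.volume_Iic]

lemma normCdf_le_integral_normPdf (x : ℝ) : normCdf x ≤ ∫ t, normPdf t :=
  setIntegral_le_integral integrable_normPdf (Eventually.of_forall fun t => (normPdf_pos t).le)

lemma hasDerivAt_normCdf (x : ℝ) : HasDerivAt normCdf (normPdf x) x :=
  hasDerivAt_integral_Iic integrable_normPdf continuous_normPdf x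

lemma continuous_normCdf : Continuous normCdf :=
  continuous_iff_continuousAt.mpr fun x => (hasDerivAt_normCdf x).continuousAt

lemma tendsto_normCdf_atBot : Tendsto normCdf atBot (𝓝 0) :=
  tendsto_integral_Iic_atBot integrable_normPdf

lemma integrable_snPdf (l : ℝ) : Integrable fun t => 2 * normPdf t * normCdf (l * t) :=
  (integrable_normPdf.const_mul 2).mul_bdd
    (continuous_normCdf.comp (continuous_const_mul l)).aestronglyMeasurable
    (Eventually.of_forall fun t => by
      rw [Real.norm_eq_abs, abs_of_pos (normCdf_pos _)]
      exact normCdf_le_integral_normPdf _)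

lemma snCdf_one (x : ℝ) : snCdf 1 x = normCdf x ^ 2 := by
  have hderiv (t : ℝ) : HasDerivAt (fun y => normCdf y ^ 2) (2 * normPdf t * normCdf (1 * t)) t :=
    ((hasDerivAt_normCdf t).pow 2).congr_deriv (by rw [one_mul]; ring)
  have htend : Tendsto (fun y => normCdf y ^ 2) atBot (𝓝 0) := by
    simpa using tendsto_normCdf_atBot.pow 2
  rw [snCdf, integral_Iic_of_hasDerivAt_of_tendsto' (fun t _ => hderiv t)
    (integrable_snPdf 1).integrableOn htend, sub_zero]

lemma betaFn_right_one {a : ℝ} (ha : 0 < a) : betaFn a 1 = a⁻¹ := by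
  rw [betaFn, Real.Gamma_add_one ha.ne', Real.Gamma_one]
  have := (Real.Gamma_pos_of_pos ha).ne'
  field_simp

lemma bsnPdf_one_right_one {a : ℝ} (ha : 0 < a) (x : ℝ) :
    bsnPdf 1 a 1 x = 2 * a * normCdf x ^ (2 * a - 1) * normPdf x := by
  have hΦ := normCdf_pos x
  rw [bsnPdf, betaFn_right_one ha, snCdf_one, one_mul, sub_self, Real.rpow_zero, mul_one,
    ← Real.rpow_natCast, ← Real.rpow_mul hΦ.le,
    show 2 * a - 1 = (2 : ℕ) * (a - 1) + 1 by push_cast; ring, Real.rpow_add_one hΦ.ne']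
  field_simp

/-- `BSN(1, 1/2, 1)` is the standard normal distribution. -/
theorem bsn_one_half_one (x : ℝ) : bsnPdf 1 (1/2) 1 x = normPdf x := by
  rw [bsnPdf_one_right_one one_half_pos]
  norm_num
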